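/- arXiv:2302.05568 — 6 statements merged into one kernel-verified Lean document; each statement's English description precedes it below -/
import Mathlib

section
/- For the Gerber–Dickson risk process, the ultimate ruin probability satisfies, for every nonnegative integer u, the recursive equation ψ(u) = ∑_{k=0}^{u} ψ(u+1−k)·f(k) + F̄(u), where F̄(u) = P(Y > u). -/
/-!
First-step analysis. The claim paths leading to ruin from capital `u` split according to
the first claim `k = Y 0`: if `k > u` ruin occurs at time 1, and otherwise the surplus at time 1
is `u + 1 - k ≥ 1` and ruin happens iff the process driven by the shifted claims `Y (j + 1)` is
ruined from `u + 1 - k`. The shifted sequence is independent of `Y 0` and, being i.i.d. with the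
same marginals, has the same law as the whole sequence, so its ruin probability is `ψ (u + 1 - k)`.
-/

open MeasureTheory ProbabilityTheory

lemma ProbabilityTheory.iIndepFun.identDistrib_precomp {Ω ι β : Type*} [MeasurableSpace Ω]
    [MeasurableSpace β] {P : Measure Ω} {Y : ι → Ω → β} (hY : ∀ i, Measurable (Y i))
    (hindep : iIndepFun Y P) {i₀ : ι} (hident : ∀ i, IdentDistrib (Y i) (Y i₀) P P)
    {σ : ι → ι} (hσ : σ.Injective) :
    IdentDistrib (fun ω i => Y (σ i) ω) (fun ω i => Y i ω) P P where
  aemeasurable_fst := (measurable_pi_lambda _ fun i => hY (σ i)).aemeasurable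
  aemeasurable_snd := (measurable_pi_lambda _ hY).aemeasurable
  map_eq := by
    rw [(hindep.precomp hσ).map_fun_eq_infinitePi_map (fun i => hY (σ i)),
      hindep.map_fun_eq_infinitePi_map hY]
    congr with i : 1
    exact (hident (σ i)).map_eq.trans (hident i).map_eq.symm

lemma ProbabilityTheory.iIndepFun.indepFun_head_tail {Ω β : Type*} [MeasurableSpace Ω]
    [MeasurableSpace β] {P : Measure Ω} {Y : ℕ → Ω → β} (hY : ∀ i, Measurable (Y i))
    (hindep : iIndepFun Y P) :
    IndepFun (Y 0) (fun ω j => Y (j + 1) ω) P := by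
  rw [IndepFun_iff_Indep]
  refine indep_of_indep_of_le (indep_iSup_of_disjoint (fun i => (hY i).comap_le) hindep.iIndep
    (S := {0}) (T := {i | i ≠ 0}) (by simp)) (le_iSup₂_of_le 0 rfl le_rfl) ?_
  simp only [MeasurableSpace.pi, MeasurableSpace.comap_iSup, MeasurableSpace.comap_comp]
  exact iSup_le fun j => le_iSup₂_of_le (j + 1) j.succ_ne_zero le_rfl

namespace GerberDickson

/-- `y j` plays the role of the paper's claim `Y_{j+1}`. -/
def ruinSet (v : ℕ) : Set (ℕ → ℕ) :=
  {y | ∃ t : ℕ, 1 ≤ t ∧ (v : ℤ) + t - ∑ j ∈ Finset.range t, (y j : ℤ) ≤ 0}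

lemma measurableSet_ruinSet (v : ℕ) : MeasurableSet (ruinSet v) :=
  measurableSet_setOfPred.2 <| .exists fun _ => measurable_const.and <|
    measurableSet_setOfPred.1 (measurableSet_le (by fun_prop) measurable_const)

lemma mem_ruinSet_iff {u : ℕ} {y : ℕ → ℕ} :
    y ∈ ruinSet u ↔
      u < y 0 ∨ y 0 ≤ u ∧ (fun j => y (j + 1)) ∈ ruinSet (u + 1 - y 0) := by
  have surplus_succ : ∀ s,
      (u : ℤ) + (s + 1 : ℕ) - ∑ j ∈ Finset.range (s + 1), (y j : ℤ) =
        (u + 1 - y 0 : ℤ) + s - ∑ j ∈ Finset.range s, (y (j + 1) : ℤ) := fun s => by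
    rw [Finset.sum_range_succ']; push_cast; ring
  constructor
  · rintro ⟨_ | s, hs, hle⟩
    · omega
    rw [surplus_succ] at hle
    rcases s with _ | s
    · simp only [Nat.cast_zero, add_zero, Finset.range_zero, Finset.sum_empty, sub_zero] at hle
      omega
    · refine or_iff_not_imp_left.2 fun h => ⟨by omega, s + 1, by omega, ?_⟩
      push_cast [show y 0 ≤ u + 1 by omega]
      exact hle
  · rintro (h | ⟨h, s, hs, hle⟩)
    · refine ⟨1, le_rfl, ?_⟩
      simp only [Finset.sum_range_one]
      push_cast
      omega
    · refine ⟨s + 1, by omega, ?_⟩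
      rw [surplus_succ]
      push_cast [show y 0 ≤ u + 1 by omega] at hle
      exact hle

lemma ruinSet_eq_union (u : ℕ) :
    ruinSet u = {y | u < y 0} ∪
      ⋃ k ∈ Finset.range (u + 1),
        {y | y 0 = k} ∩ (fun y j => y (j + 1)) ⁻¹' ruinSet (u + 1 - k) := by
  ext y
  rw [mem_ruinSet_iff]
  simp only [Set.mem_union, Set.mem_iUnion, Set.mem_inter_iff, Set.mem_ofPred_eq,
    Set.mem_preimage, Finset.mem_range, exists_prop]
  constructor
  · rintro (h | ⟨h, hy⟩)
    · exact .inl h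
    · exact .inr ⟨y 0, by omega, rfl, hy⟩
  · rintro (h | ⟨k, hk, rfl, hy⟩)
    · exact .inl h
    · exact .inr ⟨by omega, hy⟩

lemma measureReal_preimage_ruinSet {Ω : Type*} [MeasurableSpace Ω] {P : Measure Ω}
    [IsFiniteMeasure P] {Y : ℕ → Ω → ℕ} (hY : ∀ j, Measurable (Y j))
    (hindep : IndepFun (Y 0) (fun ω j => Y (j + 1) ω) P) (u : ℕ) :
    P.real ((fun ω j => Y j ω) ⁻¹' ruinSet u) =
      ∑ k ∈ Finset.range (u + 1),
        P.real (Y 0 ⁻¹' {k}) * P.real ((fun ω j => Y (j + 1) ω) ⁻¹' ruinSet (u + 1 - k)) +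
      P.real {ω | u < Y 0 ω} := by
  set T : Ω → ℕ → ℕ := fun ω j => Y (j + 1) ω
  set A : ℕ → Set Ω := fun k => Y 0 ⁻¹' {k} ∩ T ⁻¹' ruinSet (u + 1 - k)
  have hsplit : (fun ω j => Y j ω) ⁻¹' ruinSet u =
      {ω | u < Y 0 ω} ∪ ⋃ k ∈ Finset.range (u + 1), A k := by
    rw [ruinSet_eq_union]
    simp only [Set.preimage_union, Set.preimage_iUnion₂, Set.preimage_inter]
    rfl
  have hA : ∀ k, MeasurableSet (A k) := fun k =>
    (hY 0 (measurableSet_singleton k)).inter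
      ((measurable_pi_lambda _ fun j => hY (j + 1)) (measurableSet_ruinSet _))
  have hA_disj : Set.PairwiseDisjoint ↑(Finset.range (u + 1)) A := fun k _ l _ hkl =>
    Set.disjoint_left.2 fun ω hk hl => hkl (hk.1.symm.trans hl.1)
  have hdisj : Disjoint {ω | u < Y 0 ω} (⋃ k ∈ Finset.range (u + 1), A k) := by
    simp only [Set.disjoint_left, Set.mem_iUnion, Finset.mem_range, A, Set.mem_inter_iff,
      Set.mem_preimage, Set.mem_singleton_iff, Set.mem_ofPred_eq]
    rintro ω hω ⟨k, hk, hωk, -⟩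
    omega
  rw [hsplit, measureReal_union' hdisj (hY 0 measurableSet_Ioi) (measure_ne_top _ _)
      (measure_ne_top _ _), measureReal_biUnion_finset hA_disj fun k _ => hA k, add_comm]
  congr 1
  refine Finset.sum_congr rfl fun k _ => ?_
  rw [measureReal_def, hindep.measure_inter_preimage_eq_mul _ _ (measurableSet_singleton k)
    (measurableSet_ruinSet _), ENNReal.toReal_mul]
  rfl

end GerberDickson

open GerberDickson in
theorem stmt_0_general
    {Ω : Type*} [MeasurableSpace Ω] (P : Measure Ω) [IsProbabilityMeasure P]
    (Y : ℕ → Ω → ℕ) (hYmeas : ∀ j, Measurable (Y j))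
    (hindep : iIndepFun Y P)
    (hident : ∀ j, IdentDistrib (Y j) (Y 0) P P)
    (f Fbar : ℕ → ℝ)
    (hf : ∀ y, (P {ω | Y 0 ω = y}).toReal = f y)
    (hFbar : ∀ y, (P {ω | y < Y 0 ω}).toReal = Fbar y)
    (ψ : ℕ → ℝ)
    (hψ : ∀ u : ℕ, ψ u = (P {ω | ∃ t : ℕ, 1 ≤ t ∧
        (u : ℤ) + t - ∑ j ∈ Finset.range t, (Y j ω : ℤ) ≤ 0}).toReal) :
    ∀ u : ℕ, ψ u = (∑ k ∈ Finset.range (u + 1), ψ (u + 1 - k) * f k) + Fbar u := by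
  have hψ_seq : ∀ v, ψ v = P.real ((fun ω j => Y j ω) ⁻¹' ruinSet v) := hψ
  have hψ_tail : ∀ v, ψ v = P.real ((fun ω j => Y (j + 1) ω) ⁻¹' ruinSet v) := fun v => by
    rw [hψ_seq, measureReal_def, measureReal_def,
      (hindep.identDistrib_precomp hYmeas hident (add_left_injective 1)).measure_mem_eq
        (measurableSet_ruinSet v)]
  intro u
  rw [hψ_seq, measureReal_preimage_ruinSet hYmeas (hindep.indepFun_head_tail hYmeas), ← hFbar u]
  congr 1
  refine Finset.sum_congr rfl fun k _ => ?_
  rw [hψ_tail, ← hf k, mul_comm]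
  rfl

/-- For the Gerber–Dickson risk process, the ultimate ruin probability satisfies
`ψ(u) = ∑_{k=0}^{u} ψ(u+1−k)·f(k) + F̄(u)` for every `u : ℕ`. -/
theorem stmt_0
    {Ω : Type*} [MeasurableSpace Ω] (P : Measure Ω) [IsProbabilityMeasure P]
    (Y : ℕ → Ω → ℕ) (hYmeas : ∀ j, Measurable (Y j))
    (hindep : iIndepFun Y P)
    (hident : ∀ j, IdentDistrib (Y j) (Y 0) P P)
    (f Fbar : ℕ → ℝ)
    (hf : ∀ y, (P {ω | Y 0 ω = y}).toReal = f y)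
    (hFbar : ∀ y, (P {ω | y < Y 0 ω}).toReal = Fbar y)
    (hsummable : Summable (fun y : ℕ => (y : ℝ) * f y))
    (hnet : ∑' y : ℕ, (y : ℝ) * f y < 1)
    (ψ : ℕ → ℝ)
    (hψ : ∀ u : ℕ, ψ u = (P {ω | ∃ t : ℕ, 1 ≤ t ∧
        (u : ℤ) + t - ∑ j ∈ Finset.range t, (Y j ω : ℤ) ≤ 0}).toReal) :
    ∀ u : ℕ, ψ u = (∑ k ∈ Finset.range (u + 1), ψ (u + 1 - k) * f k) + Fbar u :=
  stmt_0_general P Y hYmeas hindep hident f Fbar hf hFbar ψ hψ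
end

section
/- The characteristic polynomial p has exactly two positive real roots, counted with multiplicity; that is, the multiset of real roots of p that are strictly positive has cardinality 2 (one of them being the root y = 1). -/
/-!
Multiplied by `f 0`, the characteristic polynomial becomes
`f 0 y^m + (f 1 - 1) y^(m-1) + f 2 y^(m-2) + ⋯ + f m`, whose coefficients change sign exactly
twice (`f 1 - 1 < 0` because `f 0 > 0`), so by Descartes' rule of signs it has at most two
positive roots. On the other hand `y = 1` is a root because `∑ f = 1`, the derivative there is
`1 - μ > 0` and the value at `0` is `f m > 0`, so there is a second root in `(0, 1)`.
-/

open Polynomial Finset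

namespace Polynomial

section Semiring

variable {R : Type*} [Semiring R] [LinearOrder R]

theorem signVariations_eq_zero_of_coeff_nonneg {P : R[X]} (h : ∀ n, 0 ≤ P.coeff n) :
    P.signVariations = 0 := by
  induction hd : P.support.card using Nat.strong_induction_on generalizing P with
  | _ d ih =>
  rcases eq_or_ne P 0 with rfl | hP
  · simp
  have hE : ∀ n, 0 ≤ P.eraseLead.coeff n := fun n => by
    rw [eraseLead_coeff]; split_ifs <;> simp [h]
  rw [signVariations_eq_eraseLead_add_ite hP, ih _ (hd ▸ eraseLead_support_card_lt hP) hE rfl,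
    if_neg]
  have hlead : 0 < P.leadingCoeff := (h _).lt_of_ne' (leadingCoeff_ne_zero.mpr hP)
  have hElead : 0 ≤ P.eraseLead.leadingCoeff := hE _
  rcases hElead.eq_or_lt with h0 | hpos
  · simp [sign_pos hlead, ← h0]
  · simp [sign_pos hlead, sign_pos hpos]

theorem signVariations_C_mul_X_pow_add {a : R} (ha : a ≠ 0) {Q : R[X]} {d : ℕ}
    (hQ : Q.degree < d) :
    (C a * X ^ d + Q).signVariations =
      Q.signVariations + if SignType.sign a = -SignType.sign Q.leadingCoeff then 1 else 0 := by
  have hdeg : Q.degree < (C a * X ^ d).degree := by rwa [degree_C_mul_X_pow d ha]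
  have hne : C a * X ^ d + Q ≠ 0 :=
    ne_zero_of_degree_gt (degree_add_eq_left_of_degree_lt hdeg ▸ hdeg)
  rw [signVariations_eq_eraseLead_add_ite hne, eraseLead_add_of_degree_lt_left hdeg,
    eraseLead_C_mul_X_pow, zero_add, leadingCoeff_add_of_degree_lt' hdeg, leadingCoeff_C_mul_X_pow]

theorem signVariations_C_mul_X_pow_add_C_mul_X_pow_add_eq_two {a b : R} (ha : 0 < a)
    (hb : b < 0) {Q : R[X]} (hQ0 : Q ≠ 0) (hQ : ∀ n, 0 ≤ Q.coeff n) {d : ℕ}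
    (hd : Q.natDegree ≤ d) :
    (C a * X ^ (d + 2) + C b * X ^ (d + 1) + Q).signVariations = 2 := by
  have hQdeg : Q.degree < ↑(d + 1) :=
    (degree_le_of_natDegree_le hd).trans_lt (WithBot.coe_lt_coe.mpr d.lt_succ_self)
  have hbdeg : Q.degree < (C b * X ^ (d + 1)).degree := by rwa [degree_C_mul_X_pow _ hb.ne]
  have hdeg : (C b * X ^ (d + 1) + Q).degree < ↑(d + 2) := by
    rw [degree_add_eq_left_of_degree_lt hbdeg, degree_C_mul_X_pow _ hb.ne]
    exact_mod_cast (d + 1).lt_succ_self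
  have hQlead : 0 < Q.leadingCoeff := (hQ _).lt_of_ne' (leadingCoeff_ne_zero.mpr hQ0)
  rw [add_assoc, signVariations_C_mul_X_pow_add ha.ne' hdeg,
    signVariations_C_mul_X_pow_add hb.ne hQdeg, signVariations_eq_zero_of_coeff_nonneg hQ,
    leadingCoeff_add_of_degree_lt' hbdeg, leadingCoeff_C_mul_X_pow]
  simp [sign_pos ha, sign_neg hb, sign_pos hQlead]

end Semiring

theorem coeff_sum_C_mul_X_pow_sub {R : Type*} [Semiring R] (c : ℕ → R) (n j : ℕ) :
    (∑ k ∈ range (n + 1), C (c k) * X ^ (n - k)).coeff j =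
      if j ≤ n then c (n - j) else 0 := by
  have hreflect : ∑ k ∈ range (n + 1), C (c k) * X ^ (n - k) =
      ∑ k ∈ range (n + 1), C (c (n - k)) * X ^ k := by
    rw [← sum_range_reflect]
    refine sum_congr rfl fun k hk => ?_
    have := mem_range.1 hk
    congr 3; omega
  simp [hreflect, finsetSum_coeff]

theorem exists_isRoot_mem_Ioo_of_derivative_pos {P : ℝ[X]} {a b : ℝ} (hab : a < b)
    (ha : 0 < P.eval a) (hb : P.IsRoot b) (hd : 0 < P.derivative.eval b) :
    ∃ y ∈ Set.Ioo a b, P.IsRoot y := by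
  have hPQ : (X - C b) * (P /ₘ (X - C b)) = P := mul_divByMonic_eq_iff_isRoot.mpr hb
  set Q := P /ₘ (X - C b)
  have hQb : 0 < Q.eval b := by rw [← hPQ] at hd; simpa using hd
  have hQa : Q.eval a < 0 := by
    rw [← hPQ, eval_mul] at ha
    simp only [eval_sub, eval_X, eval_C] at ha
    nlinarith
  obtain ⟨y, hy, hQy⟩ := intermediate_value_Ioo hab.le Q.continuous.continuousOn ⟨hQa, hQb⟩
  exact ⟨y, hy, by rw [← hPQ]; simp [hQy]⟩

theorem card_roots_filter_pos_eq_two {P : ℝ[X]} (hP : P ≠ 0) (hsv : P.signVariations ≤ 2)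
    {y z : ℝ} (hy : 0 < y) (hz : 0 < z) (hyz : y ≠ z) (hPy : P.IsRoot y) (hPz : P.IsRoot z) :
    (P.roots.filter (0 < ·)).card = 2 := by
  refine le_antisymm ?_ ?_
  · rw [← Multiset.countP_eq_card_filter]
    exact (roots_countP_pos_le_signVariations P).trans hsv
  · have hsub : y ::ₘ {z} ≤ P.roots.filter (0 < ·) := by
      refine (Multiset.le_iff_subset (by simp [hyz])).mpr fun x hx => ?_
      simp only [Multiset.mem_cons, Multiset.mem_singleton] at hx
      rcases hx with rfl | rfl
      · exact Multiset.mem_filter.mpr ⟨(mem_roots hP).mpr hPy, hy⟩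
      · exact Multiset.mem_filter.mpr ⟨(mem_roots hP).mpr hPz, hz⟩
    simpa using Multiset.card_le_card hsub

end Polynomial

/-- `f 0 * p`, for `m = n + 2`. -/
noncomputable def scaledCharPoly (f : ℕ → ℝ) (n : ℕ) : ℝ[X] :=
  C (f 0) * X ^ (n + 2) + C (f 1 - 1) * X ^ (n + 1) +
    ∑ k ∈ range (n + 1), C (f (k + 2)) * X ^ (n - k)

theorem C_mul_charPoly_eq_scaledCharPoly {n : ℕ} {f α : ℕ → ℝ} (hf0 : f 0 ≠ 0)
    (hα0 : α 0 = (1 - f 1) / f 0)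
    (hαk : ∀ k, 1 ≤ k → k ≤ n + 1 → α k = -f (k + 1) / f 0) :
    C (f 0) * (X ^ (n + 2) - ∑ k ∈ range (n + 2), C (α k) * X ^ (n + 2 - 1 - k)) =
      scaledCharPoly f n := by
  have hterm : ∀ k ∈ range (n + 1), C (f 0) * (C (α (k + 1)) * X ^ (n + 2 - 1 - (k + 1))) =
      -(C (f (k + 2)) * X ^ (n - k)) := fun k hk => by
    rw [hαk (k + 1) le_add_self (by simpa using hk), ← mul_assoc, ← C_mul,
      mul_div_cancel₀ _ hf0, C_neg, neg_mul, show n + 2 - 1 - (k + 1) = n - k by omega]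
  rw [scaledCharPoly, mul_sub, mul_sum, sum_range_succ', sum_congr rfl hterm, sum_neg_distrib,
    hα0, ← mul_assoc, ← C_mul, mul_div_cancel₀ _ hf0]
  simp only [C_sub, C_1, show n + 2 - 1 - 0 = n + 1 from rfl]
  ring

section scaledCharPoly

variable {f : ℕ → ℝ} {n : ℕ}

theorem eval_zero_scaledCharPoly : (scaledCharPoly f n).eval 0 = f (n + 2) := by
  rw [← coeff_zero_eq_eval_zero, scaledCharPoly, coeff_add, coeff_sum_C_mul_X_pow_sub]
  simp

theorem isRoot_one_scaledCharPoly (hsum : f 0 + f 1 + ∑ k ∈ range (n + 1), f (k + 2) = 1) :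
    (scaledCharPoly f n).IsRoot 1 := by
  simp only [IsRoot.def, scaledCharPoly, eval_add, eval_mul, eval_C, eval_pow, eval_X, one_pow,
    mul_one, eval_finsetSum]
  linarith

theorem eval_one_derivative_scaledCharPoly
    (hsum : f 0 + f 1 + ∑ k ∈ range (n + 1), f (k + 2) = 1) :
    (scaledCharPoly f n).derivative.eval 1 =
      1 - (f 1 + ∑ k ∈ range (n + 1), (k + 2) * f (k + 2)) := by
  have hcast : ∀ k ∈ range (n + 1), f (k + 2) * ((n - k : ℕ) : ℝ) =
      (n + 2) * f (k + 2) - (k + 2) * f (k + 2) := fun k hk => by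
    rw [Nat.cast_sub (by simpa [Nat.lt_succ_iff] using hk)]; ring
  have hscaled :
      ((n : ℝ) + 2) * ∑ k ∈ range (n + 1), f (k + 2) = (n + 2) * (1 - f 0 - f 1) := by
    rw [← hsum]; ring
  have hderiv : (scaledCharPoly f n).derivative.eval 1 =
      f 0 * (n + 1 + 1) + (f 1 - 1) * (n + 1) +
        ∑ k ∈ range (n + 1), f (k + 2) * ((n - k : ℕ) : ℝ) := by
    simp [scaledCharPoly, eval_finsetSum, derivative_X_pow]
  rw [hderiv, sum_congr rfl hcast, sum_sub_distrib, ← mul_sum, hscaled]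
  ring

theorem signVariations_scaledCharPoly (hf : ∀ k, 0 ≤ f k) (hf0 : 0 < f 0) (hfn : 0 < f (n + 2))
    (hsum : f 0 + f 1 + ∑ k ∈ range (n + 1), f (k + 2) = 1) :
    (scaledCharPoly f n).signVariations = 2 := by
  have hcoeff := coeff_sum_C_mul_X_pow_sub (fun k => f (k + 2)) n
  refine signVariations_C_mul_X_pow_add_C_mul_X_pow_add_eq_two hf0 ?_ (fun h => ?_)
    (fun j => ?_) (natDegree_le_iff_coeff_eq_zero.mpr fun j hj => ?_)
  · linarith [sum_nonneg fun k (_ : k ∈ range (n + 1)) => hf (k + 2)]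
  · have := hcoeff 0
    simp only [h, coeff_zero, zero_le, if_true, Nat.sub_zero] at this
    linarith
  · rw [hcoeff]; split_ifs; exacts [hf _, le_rfl]
  · rw [hcoeff, if_neg hj.not_ge]

end scaledCharPoly

/-- The characteristic polynomial `p` has exactly two positive real roots, counted with
multiplicity, one of them being `y = 1`. -/
theorem stmt_7 (m : ℕ) (hm : 2 ≤ m) (f : ℕ → ℝ)
    (hfnonneg : ∀ k, 0 ≤ f k) (hfsum : ∑ k ∈ Finset.range (m + 1), f k = 1)
    (hf0 : 0 < f 0) (hfm : 0 < f m)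
    (hmean : ∑ k ∈ Finset.range (m + 1), (k : ℝ) * f k < 1)
    (α : ℕ → ℝ)
    (hα0 : α 0 = (1 - f 1) / f 0)
    (hαk : ∀ k, 1 ≤ k → k ≤ m - 1 → α k = -(f (k + 1)) / f 0)
    (p : Polynomial ℝ)
    (hp : p = X ^ m - ∑ k ∈ Finset.range m, C (α k) * X ^ (m - 1 - k)) :
    (p.roots.filter (fun z => 0 < z)).card = 2 ∧ (1 : ℝ) ∈ p.roots := by
  obtain ⟨n, rfl⟩ : ∃ n, m = n + 2 := ⟨m - 2, by omega⟩
  have hsum : f 0 + f 1 + ∑ k ∈ range (n + 1), f (k + 2) = 1 := by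
    rw [sum_range_succ', sum_range_succ'] at hfsum; norm_num at hfsum; linarith
  have hmean' : f 1 + ∑ k ∈ range (n + 1), ((k : ℝ) + 2) * f (k + 2) < 1 := by
    rw [sum_range_succ', sum_range_succ'] at hmean; push_cast at hmean; ring_nf at hmean ⊢
    linarith
  have hq : C (f 0) * p = scaledCharPoly f n := by
    rw [hp]
    exact C_mul_charPoly_eq_scaledCharPoly hf0.ne' hα0 fun k h1 h2 => hαk k h1 (by omega)
  have hroots : p.roots = (scaledCharPoly f n).roots := by rw [← hq, roots_C_mul p hf0.ne']
  have hq0 : 0 < (scaledCharPoly f n).eval 0 := eval_zero_scaledCharPoly.symm ▸ hfm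
  have hqne : scaledCharPoly f n ≠ 0 := fun h => by simp [h] at hq0
  have hq1 := isRoot_one_scaledCharPoly hsum
  obtain ⟨y, hy, hqy⟩ := exists_isRoot_mem_Ioo_of_derivative_pos zero_lt_one hq0 hq1
    (by rw [eval_one_derivative_scaledCharPoly hsum]; linarith)
  have hsv := signVariations_scaledCharPoly hfnonneg hf0 hfm hsum
  rw [hroots]
  exact ⟨card_roots_filter_pos_eq_two hqne hsv.le hy.1 one_pos hy.2.ne hqy hq1,
    (mem_roots hqne).mpr hq1⟩
end

section
/- The characteristic polynomial factors as p(y) = (y − 1)·q(y), where q(y) = y^{m−1} − ∑_{k=1}^{m−1} (F̄(k)/f(0))·y^{m−1−k} and F̄(k) = ∑_{j=k+1}^{m} f(j). -/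
/-!
Writing `c k = F̄(k)/f(0)`, the tail recursion `F̄(k) = f(k+1) + F̄(k+1)` with `F̄(m) = 0` and
`f(0) + F̄(0) = 1` turns the coefficients of `p` into consecutive differences:
`α_0 = 1 + c 1` and `α_k = c (k+1) - c k`. Multiplying `q` by `X - 1` produces exactly these
differences, since multiplication by `X` shifts the coefficient sequence of `q` by one place.
-/

open Polynomial Finset

theorem Finset.sum_Icc_eq_add_sum_Icc_succ {M : Type*} [AddCommMonoid M] (f : ℕ → M)
    {a b : ℕ} (h : a ≤ b) : ∑ k ∈ Icc a b, f k = f a + ∑ k ∈ Icc (a + 1) b, f k := by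
  rw [← add_sum_Ioc_eq_sum_Icc h, Icc_add_one_left_eq_Ioc]

namespace Polynomial

variable {R : Type*} [CommRing R]

theorem sum_Icc_one_succ_C_mul_X_pow (d : ℕ → R) (n : ℕ) :
    ∑ k ∈ Icc 1 (n + 1), C (d k) * X ^ (n + 1 - k)
      = X * ∑ k ∈ Icc 1 n, C (d k) * X ^ (n - k) + C (d (n + 1)) := by
  rw [sum_Icc_succ_top (by omega), Nat.sub_self, pow_zero, mul_one, mul_sum]
  congr 1
  refine sum_congr rfl fun k hk => ?_
  rw [show n + 1 - k = n - k + 1 by grind, pow_succ]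
  ring

theorem X_mul_sum_Icc_add_C (c : ℕ → R) (n : ℕ) :
    X * ∑ k ∈ Icc 1 n, C (c k) * X ^ (n - k) + C (c (n + 1))
      = C (c 1) * X ^ n + ∑ k ∈ Icc 1 n, C (c (k + 1)) * X ^ (n - k) := by
  induction n with
  | zero => simp
  | succ n ih =>
    rw [sum_Icc_one_succ_C_mul_X_pow c, sum_Icc_one_succ_C_mul_X_pow (fun k => c (k + 1))]
    linear_combination X * ih

theorem X_pow_succ_sub_sum_eq_X_sub_one_mul (a c : ℕ → R) (n : ℕ) (h0 : a 0 = 1 + c 1)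
    (hsucc : ∀ k ∈ Icc 1 n, a k = c (k + 1) - c k) (hlast : c (n + 1) = 0) :
    X ^ (n + 1) - ∑ k ∈ range (n + 1), C (a k) * X ^ (n - k)
      = (X - 1) * (X ^ n - ∑ k ∈ Icc 1 n, C (c k) * X ^ (n - k)) := by
  have hsplit : ∑ k ∈ range (n + 1), C (a k) * X ^ (n - k)
      = C (1 + c 1) * X ^ n + (∑ k ∈ Icc 1 n, C (c (k + 1)) * X ^ (n - k)
        - ∑ k ∈ Icc 1 n, C (c k) * X ^ (n - k)) := by
    rw [Nat.range_succ_eq_Icc_zero, sum_Icc_eq_add_sum_Icc_succ _ n.zero_le, h0, Nat.sub_zero,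
      ← sum_sub_distrib]
    congr 1
    refine sum_congr rfl fun k hk => ?_
    rw [hsucc k hk, map_sub, sub_mul]
  have hshift := X_mul_sum_Icc_add_C c n
  rw [hlast, map_zero, add_zero] at hshift
  rw [hsplit, map_add, map_one]
  linear_combination hshift

end Polynomial

theorem stmt_8_general (m : ℕ) (hm : 2 ≤ m) (f : ℕ → ℝ)
    (hfsum : ∑ k ∈ Finset.range (m + 1), f k = 1)
    (hf0 : 0 < f 0)
    (α : ℕ → ℝ)
    (hα0 : α 0 = (1 - f 1) / f 0)
    (hαk : ∀ k, 1 ≤ k → k ≤ m - 1 → α k = -(f (k + 1)) / f 0)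
    (p : Polynomial ℝ)
    (hp : p = X ^ m - ∑ k ∈ Finset.range m, C (α k) * X ^ (m - 1 - k))
    (Fbar : ℕ → ℝ)
    (hFbar : ∀ k, Fbar k = ∑ j ∈ Finset.Icc (k + 1) m, f j)
    (q : Polynomial ℝ)
    (hq : q = X ^ (m - 1) -
        ∑ k ∈ Finset.Icc 1 (m - 1), C (Fbar k / f 0) * X ^ (m - 1 - k)) :
    p = (X - 1) * q := by
  obtain ⟨n, rfl⟩ : ∃ n, m = n + 1 := ⟨m - 1, by omega⟩
  have hFbar_succ (k : ℕ) (hk : k ≤ n) : Fbar k = f (k + 1) + Fbar (k + 1) := by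
    rw [hFbar, hFbar, sum_Icc_eq_add_sum_Icc_succ _ (by omega)]
  have hFbar_zero : f 0 + Fbar 0 = 1 := by
    rw [hFbar, ← hfsum, Nat.range_succ_eq_Icc_zero, sum_Icc_eq_add_sum_Icc_succ _ (Nat.zero_le _)]
  have hFbar_top : Fbar (n + 1) = 0 := by
    rw [hFbar, Icc_eq_empty (by omega), sum_empty]
  simp only [Nat.add_sub_cancel] at hp hq hαk
  subst hp hq
  refine X_pow_succ_sub_sum_eq_X_sub_one_mul α (fun k => Fbar k / f 0) n ?_ ?_ ?_
  · rw [hα0]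
    field_simp
    linarith [hFbar_succ 0 n.zero_le]
  · intro k hk
    rw [mem_Icc] at hk
    rw [hαk k hk.1 hk.2, hFbar_succ k hk.2]
    ring
  · simp [hFbar_top]

/-- The characteristic polynomial factors as `p(y) = (y − 1)·q(y)`, where
`q(y) = y^{m−1} − ∑_{k=1}^{m−1} (F̄(k)/f(0))·y^{m−1−k}` and `F̄(k) = ∑_{j=k+1}^{m} f(j)`. -/
theorem stmt_8 (m : ℕ) (hm : 2 ≤ m) (f : ℕ → ℝ)
    (hfnonneg : ∀ k, 0 ≤ f k) (hfsum : ∑ k ∈ Finset.range (m + 1), f k = 1)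
    (hf0 : 0 < f 0)
    (α : ℕ → ℝ)
    (hα0 : α 0 = (1 - f 1) / f 0)
    (hαk : ∀ k, 1 ≤ k → k ≤ m - 1 → α k = -(f (k + 1)) / f 0)
    (p : Polynomial ℝ)
    (hp : p = X ^ m - ∑ k ∈ Finset.range m, C (α k) * X ^ (m - 1 - k))
    (Fbar : ℕ → ℝ)
    (hFbar : ∀ k, Fbar k = ∑ j ∈ Finset.Icc (k + 1) m, f j)
    (q : Polynomial ℝ)
    (hq : q = X ^ (m - 1) -
        ∑ k ∈ Finset.Icc 1 (m - 1), C (Fbar k / f 0) * X ^ (m - 1 - k)) :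
    p = (X - 1) * q :=
  stmt_8_general m hm f hfsum hf0 α hα0 hαk p hp Fbar hFbar q hq
end

section
/- The polynomial q has exactly one positive real root z₂, this root is simple, and every complex root w of q satisfies |w| ≤ z₂. -/
open Polynomial Finset

/-!
With `c k ≥ 0` and `c 1 > 0`, write `q = X ^ n - ∑ c k X ^ (n - k)` as `q x = x ^ n (1 - φ x)`
with `φ x = ∑ c k / x ^ k` (`cauchyTail`) for `x > 0`. Since `φ` is strictly decreasing on
`(0, ∞)`, with `φ (c 1 / 2) > 1 > φ (1 + ∑ c k)`, it takes the value `1` at exactly one point `z`,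
and `q` is negative on `(0, z)` and positive on `(z, ∞)`. The root is simple because
`x q' x = n q x + ∑ k c k x ^ (n - k)`, which is positive at `z`. For a complex root `w`, the
triangle inequality gives `q ‖w‖ ≤ 0`, hence `‖w‖ ≤ z` (Cauchy's bound).
-/

noncomputable def cauchyPoly (n : ℕ) (c : ℕ → ℝ) : ℝ[X] :=
  X ^ n - ∑ k ∈ Icc 1 n, C (c k) * X ^ (n - k)

noncomputable def cauchyTail (n : ℕ) (c : ℕ → ℝ) (x : ℝ) : ℝ :=
  ∑ k ∈ Icc 1 n, c k / x ^ k

namespace CauchyPoly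

variable {n : ℕ} {c : ℕ → ℝ}

theorem aeval_eq {A : Type*} [CommRing A] [Algebra ℝ A] (x : A) :
    aeval x (cauchyPoly n c) = x ^ n - ∑ k ∈ Icc 1 n, algebraMap ℝ A (c k) * x ^ (n - k) := by
  simp [cauchyPoly, map_sum]

theorem eval_eq (x : ℝ) :
    (cauchyPoly n c).eval x = x ^ n - ∑ k ∈ Icc 1 n, c k * x ^ (n - k) := by
  simpa using aeval_eq (n := n) (c := c) x

theorem eval_eq_pow_mul {x : ℝ} (hx : x ≠ 0) :
    (cauchyPoly n c).eval x = x ^ n * (1 - cauchyTail n c x) := by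
  rw [eval_eq, cauchyTail, mul_sub, mul_one, mul_sum]
  congr 1
  refine sum_congr rfl fun k hk => ?_
  rw [← pow_sub_mul_pow x (mem_Icc.mp hk).2]
  field_simp

theorem X_mul_derivative :
    X * derivative (cauchyPoly n c) =
      C (n : ℝ) * cauchyPoly n c + ∑ k ∈ Icc 1 n, C (k * c k) * X ^ (n - k) := by
  have X_mul_derivative_X_pow (j : ℕ) : X * derivative (X ^ j : ℝ[X]) = C (j : ℝ) * X ^ j := by
    cases j with
    | zero => simp
    | succ j => rw [derivative_X_pow]; simp only [add_tsub_cancel_right]; ring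
  simp only [cauchyPoly, derivative_sub, derivative_sum, derivative_C_mul, mul_sub, mul_sum,
    mul_left_comm (X : ℝ[X]), X_mul_derivative_X_pow]
  rw [sub_eq_iff_eq_add, add_assoc, ← Finset.sum_add_distrib, sub_add, eq_comm,
    sub_eq_self, sub_eq_zero]
  refine sum_congr rfl fun k hk => ?_
  rw [Nat.cast_sub (mem_Icc.mp hk).2]
  simp only [map_sub, map_mul, map_natCast]
  ring

theorem strictAntiOn_cauchyTail (hc : ∀ k, 0 ≤ c k) (hc1 : 0 < c 1) (hn : 1 ≤ n) :
    StrictAntiOn (cauchyTail n c) (Set.Ioi 0) := by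
  intro x hx y hy hxy
  refine sum_lt_sum (fun k _ => ?_) ⟨1, mem_Icc.mpr ⟨le_rfl, hn⟩, ?_⟩
  · exact div_le_div_of_nonneg_left (hc k) (pow_pos hx k) (pow_le_pow_left₀ hx.le hxy.le k)
  · simpa using div_lt_div_of_pos_left hc1 hx hxy

theorem one_lt_cauchyTail_half (hc : ∀ k, 0 ≤ c k) (hc1 : 0 < c 1) (hn : 1 ≤ n) :
    1 < cauchyTail n c (c 1 / 2) := by
  have h := single_le_sum (f := fun k => c k / (c 1 / 2) ^ k)
    (fun k _ => div_nonneg (hc k) (by positivity)) (mem_Icc.mpr ⟨le_rfl, hn⟩)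
  have : c 1 / (c 1 / 2) ^ 1 = 2 := by field_simp
  rw [cauchyTail]
  linarith

theorem cauchyTail_lt_one (hc : ∀ k, 0 ≤ c k) :
    cauchyTail n c (1 + ∑ k ∈ Icc 1 n, c k) < 1 := by
  set S := ∑ k ∈ Icc 1 n, c k
  have hS : 0 ≤ S := sum_nonneg fun k _ => hc k
  calc cauchyTail n c (1 + S) ≤ ∑ k ∈ Icc 1 n, c k / (1 + S) := by
        refine sum_le_sum fun k hk => div_le_div_of_nonneg_left (hc k) (by positivity) ?_
        exact le_self_pow₀ (by linarith) (by have := (mem_Icc.mp hk).1; omega)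
    _ = S / (1 + S) := by rw [sum_div]
    _ < 1 := (div_lt_one (by positivity)).mpr (by linarith)

theorem exists_cauchyTail_eq_one (hc : ∀ k, 0 ≤ c k) (hc1 : 0 < c 1) (hn : 1 ≤ n) :
    ∃ z, 0 < z ∧ cauchyTail n c z = 1 := by
  have ha : 0 < c 1 / 2 := by positivity
  have hab : c 1 / 2 ≤ 1 + ∑ k ∈ Icc 1 n, c k := by
    have := single_le_sum (fun k _ => hc k) (mem_Icc.mpr ⟨le_rfl, hn⟩)
    linarith
  have hcont : ContinuousOn (cauchyTail n c) (Set.Icc (c 1 / 2) (1 + ∑ k ∈ Icc 1 n, c k)) :=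
    continuousOn_finsetSum _ fun k _ => continuousOn_const.div (continuousOn_pow k)
      fun x hx => pow_ne_zero k (ha.trans_le hx.1).ne'
  obtain ⟨z, hz, hz1⟩ := intermediate_value_Icc' hab hcont
    ⟨(cauchyTail_lt_one hc).le, (one_lt_cauchyTail_half hc hc1 hn).le⟩
  exact ⟨z, ha.trans_le hz.1, hz1⟩

theorem eval_neg_of_lt (hc : ∀ k, 0 ≤ c k) (hc1 : 0 < c 1) (hn : 1 ≤ n) {x z : ℝ}
    (hz : cauchyTail n c z = 1) (hx : 0 < x) (hxz : x < z) : (cauchyPoly n c).eval x < 0 := by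
  have := strictAntiOn_cauchyTail hc hc1 hn hx (hx.trans hxz) hxz
  rw [eval_eq_pow_mul hx.ne']
  exact mul_neg_of_pos_of_neg (by positivity) (by linarith)

theorem eval_pos_of_gt (hc : ∀ k, 0 ≤ c k) (hc1 : 0 < c 1) (hn : 1 ≤ n) {x z : ℝ}
    (hz0 : 0 < z) (hz : cauchyTail n c z = 1) (hzx : z < x) : 0 < (cauchyPoly n c).eval x := by
  have hx := hz0.trans hzx
  have := strictAntiOn_cauchyTail hc hc1 hn hz0 hx hzx
  rw [eval_eq_pow_mul hx.ne']
  exact mul_pos (by positivity) (by linarith)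

theorem rootMultiplicity_eq_one (hc : ∀ k, 0 ≤ c k) (hc1 : 0 < c 1) (hn : 1 ≤ n) {z : ℝ}
    (hz0 : 0 < z) (hz : (cauchyPoly n c).IsRoot z) : (cauchyPoly n c).rootMultiplicity z = 1 := by
  have hderiv : 0 < z * (derivative (cauchyPoly n c)).eval z := by
    have := congrArg (eval z) (X_mul_derivative (n := n) (c := c))
    simp only [eval_mul, eval_X, eval_add, eval_C, hz.eq_zero, mul_zero, zero_add,
      eval_finsetSum, eval_pow] at this
    rw [this]
    refine sum_pos' (fun k _ => by have := hc k; positivity) ⟨1, mem_Icc.mpr ⟨le_rfl, hn⟩, ?_⟩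
    simp only [Nat.cast_one, one_mul]
    positivity
  have hne : cauchyPoly n c ≠ 0 := fun h => by simp [h] at hderiv
  have h1 := (rootMultiplicity_pos hne).mpr hz
  have h2 : ¬ 1 < (cauchyPoly n c).rootMultiplicity z := by
    rw [one_lt_rootMultiplicity_iff_isRoot hne]
    rintro ⟨-, hd⟩
    simp [hd.eq_zero] at hderiv
  omega

theorem eval_norm_nonpos_of_aeval_eq_zero (hc : ∀ k, 0 ≤ c k) {w : ℂ}
    (hw : aeval w (cauchyPoly n c) = 0) : (cauchyPoly n c).eval ‖w‖ ≤ 0 := by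
  rw [aeval_eq, sub_eq_zero] at hw
  rw [eval_eq, sub_nonpos]
  calc ‖w‖ ^ n = ‖∑ k ∈ Icc 1 n, algebraMap ℝ ℂ (c k) * w ^ (n - k)‖ := by rw [← hw, norm_pow]
    _ ≤ ∑ k ∈ Icc 1 n, ‖algebraMap ℝ ℂ (c k) * w ^ (n - k)‖ := norm_sum_le _ _
    _ = ∑ k ∈ Icc 1 n, c k * ‖w‖ ^ (n - k) := by
      refine sum_congr rfl fun k _ => ?_
      rw [norm_mul, norm_pow, Complex.coe_algebraMap, Complex.norm_real,
        Real.norm_of_nonneg (hc k)]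

theorem exists_unique_pos_root (hc : ∀ k, 0 ≤ c k) (hc1 : 0 < c 1) (hn : 1 ≤ n) :
    ∃ z : ℝ, 0 < z ∧ (cauchyPoly n c).eval z = 0 ∧
      (∀ x : ℝ, 0 < x → (cauchyPoly n c).eval x = 0 → x = z) ∧
      (cauchyPoly n c).rootMultiplicity z = 1 ∧
      (∀ w : ℂ, aeval w (cauchyPoly n c) = 0 → ‖w‖ ≤ z) := by
  obtain ⟨z, hz0, hz⟩ := exists_cauchyTail_eq_one hc hc1 hn
  have hroot : (cauchyPoly n c).eval z = 0 := by
    rw [eval_eq_pow_mul hz0.ne', hz, sub_self, mul_zero]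
  refine ⟨z, hz0, hroot, fun x hx hqx => ?_, rootMultiplicity_eq_one hc hc1 hn hz0 hroot,
    fun w hw => ?_⟩
  · rcases lt_trichotomy x z with hxz | rfl | hzx
    · exact absurd hqx (eval_neg_of_lt hc hc1 hn hz hx hxz).ne
    · rfl
    · exact absurd hqx (eval_pos_of_gt hc hc1 hn hz0 hz hzx).ne'
  · by_contra! hzw
    exact (eval_pos_of_gt hc hc1 hn hz0 hz hzw).not_ge (eval_norm_nonpos_of_aeval_eq_zero hc hw)

end CauchyPoly

theorem stmt_9_general (m : ℕ) (hm : 2 ≤ m) (f : ℕ → ℝ)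
    (hfnonneg : ∀ k, 0 ≤ f k)
    (hf0 : 0 < f 0) (hfm : 0 < f m)
    (Fbar : ℕ → ℝ)
    (hFbar : ∀ k, Fbar k = ∑ j ∈ Finset.Icc (k + 1) m, f j)
    (q : Polynomial ℝ)
    (hq : q = X ^ (m - 1) -
        ∑ k ∈ Finset.Icc 1 (m - 1), C (Fbar k / f 0) * X ^ (m - 1 - k)) :
    ∃ z₂ : ℝ, 0 < z₂ ∧ q.eval z₂ = 0 ∧
      (∀ x : ℝ, 0 < x → q.eval x = 0 → x = z₂) ∧
      q.rootMultiplicity z₂ = 1 ∧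
      (∀ w : ℂ, Polynomial.aeval w q = 0 → ‖w‖ ≤ z₂) := by
  have hc : ∀ k, 0 ≤ Fbar k / f 0 := fun k =>
    div_nonneg (hFbar k ▸ sum_nonneg fun j _ => hfnonneg j) hf0.le
  have hc1 : 0 < Fbar 1 / f 0 := by
    refine div_pos (hfm.trans_le ?_) hf0
    rw [hFbar]
    exact single_le_sum (fun j _ => hfnonneg j) (mem_Icc.mpr ⟨hm, le_rfl⟩)
  subst hq
  exact CauchyPoly.exists_unique_pos_root hc hc1 (by omega)

/-- The polynomial `q` has exactly one positive real root `z₂`, this root is simple, and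
every complex root `w` of `q` satisfies `|w| ≤ z₂`. -/
theorem stmt_9 (m : ℕ) (hm : 2 ≤ m) (f : ℕ → ℝ)
    (hfnonneg : ∀ k, 0 ≤ f k) (hfsum : ∑ k ∈ Finset.range (m + 1), f k = 1)
    (hf0 : 0 < f 0) (hfm : 0 < f m)
    (Fbar : ℕ → ℝ)
    (hFbar : ∀ k, Fbar k = ∑ j ∈ Finset.Icc (k + 1) m, f j)
    (q : Polynomial ℝ)
    (hq : q = X ^ (m - 1) -
        ∑ k ∈ Finset.Icc 1 (m - 1), C (Fbar k / f 0) * X ^ (m - 1 - k)) :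
    ∃ z₂ : ℝ, 0 < z₂ ∧ q.eval z₂ = 0 ∧
      (∀ x : ℝ, 0 < x → q.eval x = 0 → x = z₂) ∧
      q.rootMultiplicity z₂ = 1 ∧
      (∀ w : ℂ, Polynomial.aeval w q = 0 → ‖w‖ ≤ z₂) :=
  stmt_9_general m hm f hfnonneg hf0 hfm Fbar hFbar q hq
end

section
/- The number 1 is a simple root of the characteristic polynomial p, and every complex root z of p with z ≠ 1 satisfies |z| < 1. -/
/-!
Multiplying by `f 0`, the characteristic polynomial becomes `X ^ m (G (1 / X) - 1 / X)`, where
`G s = ∑ f j s ^ j` is the generating function of `f`. So `1` is a root because `G 1 = 1`, and its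
derivative there is `1 - μ > 0`. A root `z` with `|z| ≥ 1` gives a fixed point `w = 1 / z` of `G` in
the closed unit disc, and then `|w - 1| = |∑ f j (w ^ j - 1)| ≤ ∑ j f j |w - 1| = μ |w - 1|`
forces `w = 1`.
-/

open Polynomial Finset

noncomputable def pgfFixedPointPoly (f : ℕ → ℝ) (m : ℕ) : ℝ[X] :=
  ∑ j ∈ range (m + 1), C (f j) * X ^ (m - j) - X ^ (m - 1)

lemma norm_pow_sub_one_le {R : Type*} [SeminormedRing R] [NormOneClass R] {w : R}
    (hw : ‖w‖ ≤ 1) (n : ℕ) : ‖w ^ n - 1‖ ≤ n * ‖w - 1‖ := by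
  rw [← geom_sum_mul]
  refine (norm_mul_le _ _).trans ?_
  gcongr
  calc ‖∑ i ∈ range n, w ^ i‖ ≤ ∑ i ∈ range n, ‖w ^ i‖ := norm_sum_le _ _
    _ ≤ ∑ _i ∈ range n, (1 : ℝ) :=
        sum_le_sum fun i _ => (norm_pow_le w i).trans (pow_le_one₀ (norm_nonneg w) hw)
    _ = n := by simp

lemma eq_one_of_sum_mul_pow_eq_self {s : Finset ℕ} {f : ℕ → ℝ} (hf : ∀ j ∈ s, 0 ≤ f j)
    (hsum : ∑ j ∈ s, f j = 1) (hmean : ∑ j ∈ s, (j : ℝ) * f j < 1) {w : ℂ} (hw : ‖w‖ ≤ 1)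
    (hfix : ∑ j ∈ s, (f j : ℂ) * w ^ j = w) : w = 1 := by
  by_contra hw1
  have hpos : 0 < ‖w - 1‖ := norm_pos_iff.2 (sub_ne_zero.2 hw1)
  have : ‖w - 1‖ ≤ (∑ j ∈ s, (j : ℝ) * f j) * ‖w - 1‖ :=
    calc ‖w - 1‖ = ‖∑ j ∈ s, (f j : ℂ) * (w ^ j - 1)‖ := by
          simp only [mul_sub, mul_one, sum_sub_distrib, hfix, ← Complex.ofReal_sum, hsum,
            Complex.ofReal_one]
      _ ≤ ∑ j ∈ s, ‖(f j : ℂ) * (w ^ j - 1)‖ := norm_sum_le _ _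
      _ ≤ ∑ j ∈ s, f j * (j * ‖w - 1‖) := sum_le_sum fun j hj => by
          rw [norm_mul, Complex.norm_of_nonneg (hf j hj)]
          exact mul_le_mul_of_nonneg_left (norm_pow_sub_one_le hw j) (hf j hj)
      _ = (∑ j ∈ s, (j : ℝ) * f j) * ‖w - 1‖ := by
          rw [sum_mul]; exact sum_congr rfl fun j _ => by ring
  nlinarith

lemma rootMultiplicity_eq_one_of_isRoot {R : Type*} [CommRing R] {p : R[X]} {t : R}
    (hroot : p.IsRoot t) (hderiv : ¬ (derivative p).IsRoot t) : p.rootMultiplicity t = 1 := by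
  have hp : p ≠ 0 := by rintro rfl; simp at hderiv
  refine le_antisymm (not_lt.1 fun h => hderiv ((one_lt_rootMultiplicity_iff_isRoot hp).1 h).2) ?_
  exact (rootMultiplicity_pos hp).2 hroot

section

variable {f : ℕ → ℝ} {m : ℕ}

lemma eval_one_pgfFixedPointPoly (hsum : ∑ j ∈ range (m + 1), f j = 1) :
    (pgfFixedPointPoly f m).eval 1 = 0 := by
  simp [pgfFixedPointPoly, eval_finsetSum, hsum]

lemma eval_one_derivative_pgfFixedPointPoly (hm : 1 ≤ m) (hsum : ∑ j ∈ range (m + 1), f j = 1) :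
    (derivative (pgfFixedPointPoly f m)).eval 1 = 1 - ∑ j ∈ range (m + 1), (j : ℝ) * f j := by
  have hterm : ∀ j ∈ range (m + 1), f j * ((m - j : ℕ) : ℝ) = m * f j - j * f j := fun j hj => by
    rw [Nat.cast_sub (Nat.lt_succ_iff.1 (mem_range.1 hj))]; ring
  simp only [pgfFixedPointPoly, derivative_sub, derivative_sum, derivative_C_mul, derivative_X_pow,
    eval_sub, eval_finsetSum, eval_mul, eval_C, eval_pow, eval_X, one_pow, mul_one]
  rw [sum_congr rfl hterm, sum_sub_distrib, ← mul_sum, hsum, Nat.cast_sub hm]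
  ring

lemma aeval_pgfFixedPointPoly (hm : 1 ≤ m) {z : ℂ} (hz : z ≠ 0) :
    aeval z (pgfFixedPointPoly f m) =
      z ^ m * (∑ j ∈ range (m + 1), (f j : ℂ) * z⁻¹ ^ j - z⁻¹) := by
  have hpow : ∀ j ≤ m, z ^ (m - j) = z ^ m * z⁻¹ ^ j := fun j hj => by
    rw [pow_sub₀ z hz hj, inv_pow]
  simp only [pgfFixedPointPoly, map_sub, map_sum, map_mul, aeval_C, map_pow, aeval_X,
    Complex.coe_algebraMap]
  rw [mul_sub, mul_sum, hpow 1 hm, pow_one]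
  congr 1
  exact sum_congr rfl fun j hj => by rw [hpow j (Nat.lt_succ_iff.1 (mem_range.1 hj))]; ring

lemma norm_lt_one_of_aeval_pgfFixedPointPoly_eq_zero (hm : 1 ≤ m) (hf : ∀ j, 0 ≤ f j)
    (hsum : ∑ j ∈ range (m + 1), f j = 1) (hmean : ∑ j ∈ range (m + 1), (j : ℝ) * f j < 1)
    {z : ℂ} (hz : aeval z (pgfFixedPointPoly f m) = 0) (hz1 : z ≠ 1) : ‖z‖ < 1 := by
  by_contra! hz_ge
  have hz0 : z ≠ 0 := norm_pos_iff.1 (one_pos.trans_le hz_ge)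
  rw [aeval_pgfFixedPointPoly hm hz0, mul_eq_zero, sub_eq_zero] at hz
  have hfix := hz.resolve_left (pow_ne_zero m hz0)
  have hinv : ‖z⁻¹‖ ≤ 1 := by rw [norm_inv]; exact inv_le_one_of_one_le₀ hz_ge
  exact hz1 (inv_eq_one.1 (eq_one_of_sum_mul_pow_eq_self (fun j _ => hf j) hsum hmean hinv hfix))

lemma C_mul_charPoly_eq_pgfFixedPointPoly (hm : 1 ≤ m) {α : ℕ → ℝ} (hf0 : f 0 ≠ 0)
    (hα0 : α 0 = (1 - f 1) / f 0) (hαk : ∀ k, 1 ≤ k → k ≤ m - 1 → α k = -(f (k + 1)) / f 0) :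
    C (f 0) * (X ^ m - ∑ k ∈ range m, C (α k) * X ^ (m - 1 - k)) = pgfFixedPointPoly f m := by
  obtain ⟨n, rfl⟩ : ∃ n, m = n + 1 := ⟨m - 1, by omega⟩
  have hterm : ∀ k ∈ range n, C (f 0) * (C (α (k + 1)) * X ^ (n + 1 - 1 - (k + 1))) =
      -(C (f (k + 2)) * X ^ (n + 1 - (k + 2))) := fun k hk => by
    rw [hαk (k + 1) (by omega) (by have := mem_range.1 hk; omega), ← mul_assoc, ← C_mul,
      mul_div_cancel₀ _ hf0, C_neg, neg_mul]
    congr 3; omega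
  simp only [pgfFixedPointPoly, sum_range_succ', mul_sub, mul_add, mul_sum]
  rw [sum_congr rfl hterm, sum_neg_distrib, hα0, ← mul_assoc, ← C_mul, mul_div_cancel₀ _ hf0]
  simp only [C_sub, C_1, Nat.add_sub_cancel, Nat.sub_zero]
  ring

end

theorem stmt_11_general (m : ℕ) (hm : 2 ≤ m) (f : ℕ → ℝ)
    (hfnonneg : ∀ k, 0 ≤ f k) (hfsum : ∑ k ∈ Finset.range (m + 1), f k = 1)
    (hf0 : 0 < f 0)
    (hmean : ∑ k ∈ Finset.range (m + 1), (k : ℝ) * f k < 1)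
    (α : ℕ → ℝ)
    (hα0 : α 0 = (1 - f 1) / f 0)
    (hαk : ∀ k, 1 ≤ k → k ≤ m - 1 → α k = -(f (k + 1)) / f 0)
    (p : Polynomial ℝ)
    (hp : p = X ^ m - ∑ k ∈ Finset.range m, C (α k) * X ^ (m - 1 - k)) :
    p.rootMultiplicity 1 = 1 ∧
    (∀ z : ℂ, Polynomial.aeval z p = 0 → z ≠ 1 → ‖z‖ < 1) := by
  have hm1 : 1 ≤ m := by omega
  have hq : C (f 0) * p = pgfFixedPointPoly f m :=
    hp ▸ C_mul_charPoly_eq_pgfFixedPointPoly hm1 hf0.ne' hα0 hαk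
  have hroot : p.IsRoot 1 := by
    have h := eval_one_pgfFixedPointPoly hfsum
    rwa [← hq, eval_mul, eval_C, mul_eq_zero, or_iff_right hf0.ne'] at h
  have hsimple : ¬ (derivative p).IsRoot 1 := by
    have h := eval_one_derivative_pgfFixedPointPoly hm1 hfsum
    rw [← hq, derivative_C_mul, eval_mul, eval_C] at h
    intro hd
    rw [hd.eq_zero, mul_zero] at h
    linarith
  refine ⟨rootMultiplicity_eq_one_of_isRoot hroot hsimple, fun z hz hz1 => ?_⟩
  refine norm_lt_one_of_aeval_pgfFixedPointPoly_eq_zero hm1 hfnonneg hfsum hmean ?_ hz1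
  rw [← hq, map_mul, hz, mul_zero]

/-- `1` is a simple root of the characteristic polynomial `p`, and every complex root
`z ≠ 1` of `p` satisfies `|z| < 1`. -/
theorem stmt_11 (m : ℕ) (hm : 2 ≤ m) (f : ℕ → ℝ)
    (hfnonneg : ∀ k, 0 ≤ f k) (hfsum : ∑ k ∈ Finset.range (m + 1), f k = 1)
    (hf0 : 0 < f 0) (hfm : 0 < f m)
    (hmean : ∑ k ∈ Finset.range (m + 1), (k : ℝ) * f k < 1)
    (α : ℕ → ℝ)
    (hα0 : α 0 = (1 - f 1) / f 0)
    (hαk : ∀ k, 1 ≤ k → k ≤ m - 1 → α k = -(f (k + 1)) / f 0)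
    (p : Polynomial ℝ)
    (hp : p = X ^ m - ∑ k ∈ Finset.range m, C (α k) * X ^ (m - 1 - k)) :
    p.rootMultiplicity 1 = 1 ∧
    (∀ z : ℂ, Polynomial.aeval z p = 0 → z ≠ 1 → ‖z‖ < 1) :=
  stmt_11_general m hm f hfnonneg hfsum hf0 hmean α hα0 hαk p hp
end

section
/- Let z_1, …, z_m be pairwise distinct nonzero complex numbers whose set is closed under complex conjugation, and let b_1, …, b_m ∈ ℂ be such that ∑_{k=1}^{m} b_k·z_k^u is a real number for every integer u with 1 ≤ u ≤ m. Then the coefficients associated with conjugate roots are conjugate: for any indices j, k with z_j = conj(z_k), one has b_j = conj(b_k). -/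
/-- If `z_1,…,z_m` are pairwise distinct nonzero complex numbers whose set is closed under
conjugation, and `∑_{k} b_k·z_k^u` is real for every `1 ≤ u ≤ m`, then the coefficients
associated with conjugate roots are conjugate. -/
theorem stmt_15 (m : ℕ) (z : Fin m → ℂ) (hz : Function.Injective z)
    (hz0 : ∀ k, z k ≠ 0)
    (hconj : ∀ k, ∃ j, z j = (starRingEnd ℂ) (z k))
    (b : Fin m → ℂ)
    (hreal : ∀ u : ℕ, 1 ≤ u → u ≤ m →
      (starRingEnd ℂ) (∑ k : Fin m, b k * z k ^ u) = ∑ k : Fin m, b k * z k ^ u) :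
    ∀ j k, z j = (starRingEnd ℂ) (z k) → b j = (starRingEnd ℂ) (b k) := by
  -- define the conjugation permutation
  let σ : Fin m → Fin m := fun k => (hconj k).choose
  have hσ : ∀ k, z (σ k) = (starRingEnd ℂ) (z k) := fun k => (hconj k).choose_spec
  have hσinj : Function.Injective σ := by
    intro a b hab
    apply hz
    have := hσ a
    rw [hab, hσ b] at this
    exact (starRingEnd ℂ).injective this.symm
  let e : Fin m ≃ Fin m := Equiv.ofBijective σ (Finite.injective_iff_bijective.mp hσinj)
  have he : ∀ k, z (e k) = (starRingEnd ℂ) (z k) := hσ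
  -- coefficient vector
  set c : Fin m → ℂ := fun j => b j - (starRingEnd ℂ) (b (e.symm j)) with hc
  -- Vandermonde-type matrix
  set M : Matrix (Fin m) (Fin m) ℂ := fun u j => z j ^ (u.1 + 1) with hM
  have hMv : M.mulVec c = 0 := by
    funext u
    have h1 : 1 ≤ u.1 + 1 := Nat.le_add_left 1 u.1
    have h2 : u.1 + 1 ≤ m := u.2
    have hr := hreal (u.1 + 1) h1 h2
    have key : ∑ k : Fin m, (starRingEnd ℂ) (b k) * z (e k) ^ (u.1 + 1)
        = ∑ j : Fin m, (starRingEnd ℂ) (b (e.symm j)) * z j ^ (u.1 + 1) := by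
      rw [← Equiv.sum_comp e (fun j => (starRingEnd ℂ) (b (e.symm j)) * z j ^ (u.1 + 1))]
      simp
    have hconjsum : (starRingEnd ℂ) (∑ k : Fin m, b k * z k ^ (u.1 + 1))
        = ∑ j : Fin m, (starRingEnd ℂ) (b (e.symm j)) * z j ^ (u.1 + 1) := by
      rw [map_sum]
      rw [← key]
      congr 1
      funext k
      rw [map_mul, map_pow, he k]
    simp only [Matrix.mulVec, dotProduct, hM, hc, Pi.zero_apply]
    have : ∑ j : Fin m, z j ^ (u.1 + 1) * (b j - (starRingEnd ℂ) (b (e.symm j)))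
        = (∑ j : Fin m, b j * z j ^ (u.1 + 1))
          - ∑ j : Fin m, (starRingEnd ℂ) (b (e.symm j)) * z j ^ (u.1 + 1) := by
      rw [← Finset.sum_sub_distrib]
      congr 1; funext j; ring
    rw [this, ← hconjsum, hr, sub_self]
  have hdet : M.det ≠ 0 := by
    have hfac : M = (Matrix.vandermonde z).transpose * Matrix.diagonal z := by
      funext u j
      simp [hM, Matrix.mul_apply, Matrix.diagonal, Matrix.vandermonde, pow_succ]
    rw [hfac, Matrix.det_mul, Matrix.det_transpose, Matrix.det_vandermonde,
      Matrix.det_diagonal]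
    apply mul_ne_zero
    · apply Finset.prod_ne_zero_iff.mpr
      intro i _
      apply Finset.prod_ne_zero_iff.mpr
      intro j hj
      have hne : i ≠ j := (Finset.mem_Ioi.mp hj).ne
      exact sub_ne_zero_of_ne fun h => hne (hz h).symm
    · exact Finset.prod_ne_zero_iff.mpr fun i _ => hz0 i
  have hc0 : c = 0 := Matrix.eq_zero_of_mulVec_eq_zero hdet hMv
  intro j k hjk
  have hek : e k = j := hz (by rw [he k, ← hjk])
  have := congrFun hc0 j
  simp only [hc, Pi.zero_apply, sub_eq_zero] at this
  rw [this, ← hek, Equiv.symm_apply_apply]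
end
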